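/- Let D be a converse invariant oriented graph and let u, v be two non-adjacent vertices of D that are swapped by some automorphism of D. Then D + (u,v) is also converse invariant. -/

import Mathlib

open Finset Polynomial

/-- An oriented graph: loopless, at most one arc between any pair of vertices. -/
def IsOrgraph {V : Type*} (A : V → V → Prop) : Prop :=
  ∀ u v, A u v → u ≠ v ∧ ¬ A v u

/-- A tournament: loopless, exactly one arc between any two distinct vertices. -/
def IsTournament {W : Type*} (B : W → W → Prop) : Prop :=
  (∀ v, ¬ B v v) ∧ ∀ u v, u ≠ v → (B u v ↔ ¬ B v u)

/-- The number of subdigraphs of `B` isomorphic to `A`: a subdigraph is a pair of a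
vertex set and an arc relation contained in `B` with all endpoints in the vertex set. -/
noncomputable def copyCount {V W : Type*} (A : V → V → Prop) (B : W → W → Prop) : ℕ :=
  Nat.card {p : Set W × (W → W → Prop) //
    (∀ a b, p.2 a b → B a b ∧ a ∈ p.1 ∧ b ∈ p.1) ∧
    ∃ e : V ≃ p.1, ∀ a b, A a b ↔ p.2 (e a : W) (e b : W)}

/-- `A` is converse invariant: every finite tournament contains as many copies of `A`
as of its converse. -/
def ConverseInvariant {V : Type*} (A : V → V → Prop) : Prop :=
  ∀ (W : Type) (_ : Fintype W) (B : W → W → Prop), IsTournament B →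
    copyCount A B = copyCount (fun a b => A b a) B

/-- Out-degree. -/
noncomputable def outDeg {V : Type*} (A : V → V → Prop) (u : V) : ℕ :=
  Nat.card {v // A u v}

/-- In-degree. -/
noncomputable def inDeg {V : Type*} (A : V → V → Prop) (u : V) : ℕ :=
  Nat.card {v // A v u}

/-- The polynomial `P_D(x) = ∑_u (1+x)^{d⁺(u)} (1-x)^{d⁻(u)}`. -/
noncomputable def degPoly {V : Type*} [Fintype V] (A : V → V → Prop) : Polynomial ℤ :=
  ∑ u : V, (1 + X) ^ outDeg A u * (1 - X) ^ inDeg A u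

/-- `A` is an orientation of the simple graph `G`. -/
def IsOrientation {V : Type*} (G : SimpleGraph V) (A : V → V → Prop) : Prop :=
  (∀ u v, A u v → ¬ A v u) ∧ ∀ u v, G.Adj u v ↔ (A u v ∨ A v u)

/-!
Count injective homomorphisms instead of copies: a tournament `T` admits
`copyCount D T * |Aut D|` injective homomorphisms of `D`, and `Aut D = Aut (-D)`, so `D` is
converse invariant iff `inj(D, T) = inj(-D, T)` for every tournament `T`. An injective
homomorphism of `D` maps `u, v` to vertices joined in exactly one direction, hence
`inj(D, T) = inj(D + (u,v), T) + inj(D + (v,u), T)`, and the automorphism swapping `u` and `v`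
makes the two summands equal. Thus `inj(D + (u,v), T) = inj(D, T) / 2`, and the same for `-D`
with the converse arc `(v,u)`, whose sum `-D + (v,u)` is `-(D + (u,v))`.
-/

open Function

section Counting

variable {V W : Type*}

def InjHom (A : V → V → Prop) (B : W → W → Prop) : Type _ :=
  {e : V ↪ W // ∀ a b, A a b → B (e a) (e b)}

instance InjHom.finite [Finite W] (A : V → V → Prop) (B : W → W → Prop) :
    Finite (InjHom A B) :=
  Subtype.finite

instance RelIso.finite [Finite V] (A : V → V → Prop) : Finite (A ≃r A) :=
  Finite.of_injective _ RelIso.toEquiv_injective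

-- The type counted by `copyCount A B`.
def Copy (A : V → V → Prop) (B : W → W → Prop) : Type _ :=
  {p : Set W × (W → W → Prop) //
    (∀ a b, p.2 a b → B a b ∧ a ∈ p.1 ∧ b ∈ p.1) ∧
    ∃ e : V ≃ p.1, ∀ a b, A a b ↔ p.2 (e a : W) (e b : W)}

variable {A : V → V → Prop} {B : W → W → Prop}

def Copy.rel (c : Copy A B) (x y : c.1.1) : Prop :=
  c.1.2 x y

noncomputable def Copy.relIso (c : Copy A B) : A ≃r c.rel :=
  ⟨c.2.2.choose, (c.2.2.choose_spec _ _).symm⟩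

def InjHom.toCopy (e : InjHom A B) : Copy A B :=
  ⟨(Set.range e.1, Relation.Map A e.1 e.1), by
    refine ⟨?_, Equiv.ofInjective _ e.1.injective, fun a b => ?_⟩
    · rintro _ _ ⟨a, b, hab, rfl, rfl⟩
      exact ⟨e.2 a b hab, Set.mem_range_self a, Set.mem_range_self b⟩
    · exact (Relation.map_apply_apply e.1.injective e.1.injective A a b).symm⟩

noncomputable def InjHom.fiberEquiv (c : Copy A B) :
    {e : InjHom A B // e.toCopy = c} ≃ (A ≃r c.rel) where
  toFun e :=
    { toEquiv := (Equiv.ofInjective _ e.1.1.injective).trans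
        (Equiv.setCongr (congrArg (fun c : Copy A B => c.1.1) e.2))
      map_rel_iff' := fun {a b} => by
        obtain ⟨e, rfl⟩ := e
        exact Relation.map_apply_apply e.1.injective e.1.injective A a b }
  invFun f := ⟨⟨⟨fun a => f a, Subtype.val_injective.comp f.injective⟩,
      fun a b hab => (c.2.1 _ _ (f.map_rel_iff.mpr hab)).1⟩, by
    refine Subtype.ext (Prod.ext ?_ ?_)
    · exact (EquivLike.range_comp Subtype.val f).trans Subtype.range_coe
    · funext x y
      refine propext ⟨?_, fun hxy => ?_⟩
      · rintro ⟨a, b, hab, rfl, rfl⟩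
        exact f.map_rel_iff.mpr hab
      · obtain ⟨-, hx, hy⟩ := c.2.1 x y hxy
        exact ⟨f.symm ⟨x, hx⟩, f.symm ⟨y, hy⟩, f.symm.map_rel_iff.mpr hxy,
          congrArg Subtype.val (f.apply_symm_apply _),
          congrArg Subtype.val (f.apply_symm_apply _)⟩⟩
  left_inv _ := rfl
  right_inv _ := RelIso.ext fun _ => rfl

def RelIso.equivAut {R : W → W → Prop} (σ : A ≃r R) : (A ≃r R) ≃ (A ≃r A) where
  toFun f := f.trans σ.symm
  invFun g := g.trans σ
  left_inv f := by ext; simp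
  right_inv g := by ext; simp

theorem card_injHom (A : V → V → Prop) (B : W → W → Prop) :
    Nat.card (InjHom A B) = copyCount A B * Nat.card (A ≃r A) :=
  .trans (Nat.card_congr <| (Equiv.sigmaFiberEquiv InjHom.toCopy).symm.trans <|
    (Equiv.sigmaCongrRight fun c => (InjHom.fiberEquiv c).trans c.relIso.equivAut).trans
      (Equiv.sigmaEquivProd _ _)) (Nat.card_prod _ _)

end Counting

section AddArc

variable {V W : Type*} {A A' : V → V → Prop} {B : W → W → Prop}

def addArc (A : V → V → Prop) (u v a b : V) : Prop :=
  A a b ∨ (a = u ∧ b = v)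

theorem swap_addArc (A : V → V → Prop) (u v : V) :
    swap (addArc A u v) = addArc (swap A) v u := by
  funext a b
  simp only [swap, addArc, and_comm]

def RelIso.addArcCongr (φ : A ≃r A') (u v : V) : addArc A u v ≃r addArc A' (φ u) (φ v) :=
  ⟨φ.toEquiv, φ.map_rel_iff.or (and_congr φ.injective.eq_iff φ.injective.eq_iff)⟩

def InjHom.congrLeft (σ : A ≃r A') : InjHom A B ≃ InjHom A' B where
  toFun e := ⟨σ.symm.toEquiv.toEmbedding.trans e.1,
    fun _ _ h => e.2 _ _ (σ.symm.map_rel_iff.mpr h)⟩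
  invFun e := ⟨σ.toEquiv.toEmbedding.trans e.1, fun _ _ h => e.2 _ _ (σ.map_rel_iff.mpr h)⟩
  left_inv e := Subtype.ext <| Embedding.ext fun _ => by simp
  right_inv e := Subtype.ext <| Embedding.ext fun _ => by simp

def InjHom.addArcEquiv (u v : V) :
    InjHom (addArc A u v) B ≃ {e : InjHom A B // B (e.1 u) (e.1 v)} where
  toFun e := ⟨⟨e.1, fun a b h => e.2 a b (Or.inl h)⟩, e.2 u v (Or.inr ⟨rfl, rfl⟩)⟩
  invFun e := ⟨e.1.1, fun a b => by
    rintro (h | ⟨rfl, rfl⟩)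
    exacts [e.1.2 a b h, e.2]⟩
  left_inv _ := rfl
  right_inv _ := rfl

-- A tournament joins the images of `u` and `v` by an arc in exactly one direction.
theorem card_injHom_addArc_add_card_injHom_addArc [Finite W] (hB : IsTournament B) {u v : V}
    (huv : u ≠ v) :
    Nat.card (InjHom (addArc A u v) B) + Nat.card (InjHom (addArc A v u) B) =
      Nat.card (InjHom A B) := by
  classical
  have reverse :
      {e : InjHom A B // ¬ B (e.1 u) (e.1 v)} ≃ {e : InjHom A B // B (e.1 v) (e.1 u)} :=
    Equiv.subtypeEquivRight fun e => (hB.2 _ _ (e.1.injective.ne huv.symm)).symm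
  rw [Nat.card_congr (InjHom.addArcEquiv u v), Nat.card_congr (InjHom.addArcEquiv v u),
    ← Nat.card_congr reverse, ← Nat.card_sum, Nat.card_congr (Equiv.sumCompl _)]

theorem two_mul_card_injHom_addArc [Finite W] (hB : IsTournament B) {u v : V} (huv : u ≠ v)
    (φ : A ≃r A) (hu : φ u = v) (hv : φ v = u) :
    2 * Nat.card (InjHom (addArc A u v) B) = Nat.card (InjHom A B) := by
  have swapped : Nat.card (InjHom (addArc A u v) B) = Nat.card (InjHom (addArc A v u) B) := by
    simpa only [hu, hv] using Nat.card_congr (InjHom.congrLeft (B := B) (φ.addArcCongr u v))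
  have split := card_injHom_addArc_add_card_injHom_addArc (A := A) hB huv
  omega

end AddArc

theorem converseInvariant_iff_card_injHom {V : Type*} [Finite V] (A : V → V → Prop) :
    ConverseInvariant A ↔ ∀ (W : Type) [Fintype W] (B : W → W → Prop), IsTournament B →
      Nat.card (InjHom A B) = Nat.card (InjHom (swap A) B) := by
  have card_aut_swap : Nat.card (swap A ≃r swap A) = Nat.card (A ≃r A) :=
    Nat.card_congr ⟨RelIso.swap, RelIso.swap, fun _ => rfl, fun _ => rfl⟩
  refine forall_congr' fun W => forall_congr' fun _ => forall_congr' fun B =>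
    imp_congr_right fun _ => ?_
  rw [card_injHom, card_injHom, card_aut_swap, Nat.mul_left_inj Nat.card_pos.ne']

theorem stmt_12_general {V : Type} [Fintype V]
    (A : V → V → Prop) (hCI : ConverseInvariant A)
    (u v : V) (huv : u ≠ v)
    (φ : V ≃ V) (hφ : ∀ a b, A a b ↔ A (φ a) (φ b))
    (hu : φ u = v) (hv : φ v = u) :
    ConverseInvariant (fun a b => A a b ∨ (a = u ∧ b = v)) := by
  let σ : A ≃r A := ⟨φ, (hφ _ _).symm⟩
  rw [converseInvariant_iff_card_injHom] at hCI ⊢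
  intro W _ B hB
  change Nat.card (InjHom (addArc A u v) B) = Nat.card (InjHom (swap (addArc A u v)) B)
  rw [swap_addArc]
  have halve := two_mul_card_injHom_addArc hB huv σ hu hv
  have halve_swap := two_mul_card_injHom_addArc hB huv.symm σ.swap hv hu
  have invariant := hCI W B hB
  omega

/-- Adding an arc between two non-adjacent vertex-transitive vertices of a
converse invariant orgraph yields a converse invariant orgraph. -/
theorem stmt_12 {V : Type} [Fintype V] [DecidableEq V]
    (A : V → V → Prop) (hA : IsOrgraph A) (hCI : ConverseInvariant A)
    (u v : V) (huv : u ≠ v) (hna : ¬ A u v ∧ ¬ A v u)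
    (φ : V ≃ V) (hφ : ∀ a b, A a b ↔ A (φ a) (φ b))
    (hu : φ u = v) (hv : φ v = u) :
    ConverseInvariant (fun a b => A a b ∨ (a = u ∧ b = v)) :=
  stmt_12_general A hCI u v huv φ hφ hu hv
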